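/- For density matrices ρ, σ with σ positive definite and any α ∈ (0,1), the Bures χ²-divergence is bounded above by the α-divergence: ⟨ρ-σ, Ω_Bures(ρ-σ)⟩ ≤ tr[(ρ-σ)σ^{-α}(ρ-σ)σ^{α-1}]. -/

import Mathlib

open Matrix
open scoped ComplexOrder

/-- The trace norm `‖A‖₁ = tr √(A†A)` of a complex matrix. -/
noncomputable def traceNorm {d : ℕ} (A : Matrix (Fin d) (Fin d) ℂ) : ℝ :=
  (((Matrix.posSemidef_conjTranspose_mul_self A).isHermitian.eigenvectorUnitary.1 *
      Matrix.diagonal (fun i => ((√((Matrix.posSemidef_conjTranspose_mul_self A).isHermitian.eigenvalues i) : ℝ) : ℂ)) *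
      (star (Matrix.posSemidef_conjTranspose_mul_self A).isHermitian.eigenvectorUnitary :
        Matrix (Fin d) (Fin d) ℂ)).trace).re

/-- Real matrix power of a Hermitian matrix via the spectral decomposition
(defined as `0` on the kernel for negative exponents, i.e. a pseudo-inverse,
and as the junk value `0` for non-Hermitian input). -/
noncomputable def mrpow {d : ℕ} (σ : Matrix (Fin d) (Fin d) ℂ) (α : ℝ) :
    Matrix (Fin d) (Fin d) ℂ :=
  if hσ : σ.IsHermitian then
    (hσ.eigenvectorUnitary : Matrix (Fin d) (Fin d) ℂ) *
      Matrix.diagonal (fun i => ((hσ.eigenvalues i ^ α : ℝ) : ℂ)) *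
      star (hσ.eigenvectorUnitary : Matrix (Fin d) (Fin d) ℂ)
  else 0

/-! Write `Δ = ρ - σ` and pass to an eigenbasis of `σ` with eigenvalues `λᵢ > 0`. There the
Sylvester equation is solved entrywise, `Yᵢⱼ = 2 Δᵢⱼ / (λᵢ + λⱼ)`, so both sides are sums
`∑ᵢⱼ |Δᵢⱼ|² k(λᵢ, λⱼ)` with kernels `2 / (λᵢ + λⱼ)` and `λⱼ^(-α) λᵢ^(α-1)`. The weights `|Δᵢⱼ|²`
are symmetric, so the second kernel may be symmetrised, and then the claim is the scalar inequality
`4 ≤ (x + y) (y^(-α) x^(α-1) + x^(-α) y^(α-1)) = r^α + r^(-α) + r^(1-α) + r^(α-1)`, `r = x / y`,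
which is AM-GM twice. -/

open Unitary

lemma two_div_add_le_rpow_add_rpow_div_two {x y : ℝ} (hx : 0 < x) (hy : 0 < y) (α : ℝ) :
    2 / (x + y) ≤ (y ^ (-α) * x ^ (α - 1) + x ^ (-α) * y ^ (α - 1)) / 2 := by
  have ha := Real.rpow_pos_of_pos hx α
  have hb := Real.rpow_pos_of_pos hy α
  rw [Real.rpow_neg hx.le, Real.rpow_neg hy.le, Real.rpow_sub_one hx.ne', Real.rpow_sub_one hy.ne']
  field_simp
  nlinarith [mul_nonneg (mul_pos hx hy).le (sq_nonneg (x ^ α - y ^ α)),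
    sq_nonneg (y ^ α * x - x ^ α * y)]

lemma sum_mul_two_div_add_le_sum_mul_rpow {n : Type*} [Fintype n] {w : n → n → ℝ}
    (hw_nonneg : ∀ i j, 0 ≤ w i j) (hw_symm : ∀ i j, w j i = w i j) {l : n → ℝ}
    (hl : ∀ i, 0 < l i) (α : ℝ) :
    ∑ i, ∑ j, w i j * (2 / (l i + l j)) ≤ ∑ i, ∑ j, w i j * (l j ^ (-α) * l i ^ (α - 1)) := by
  have hswap : ∑ i, ∑ j, w i j * (l j ^ (-α) * l i ^ (α - 1)) =
      ∑ i, ∑ j, w i j * (l i ^ (-α) * l j ^ (α - 1)) := by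
    rw [Finset.sum_comm]
    simp only [hw_symm]
  calc ∑ i, ∑ j, w i j * (2 / (l i + l j))
      ≤ ∑ i, ∑ j, w i j * ((l j ^ (-α) * l i ^ (α - 1) + l i ^ (-α) * l j ^ (α - 1)) / 2) := by
        refine Finset.sum_le_sum fun i _ ↦ Finset.sum_le_sum fun j _ ↦ ?_
        exact mul_le_mul_of_nonneg_left
          (two_div_add_le_rpow_add_rpow_div_two (hl i) (hl j) α) (hw_nonneg i j)
    _ = ∑ i, ∑ j, w i j * (l j ^ (-α) * l i ^ (α - 1)) := by
      simp only [mul_add, add_div, mul_div_assoc', Finset.sum_add_distrib, ← Finset.sum_div,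
        ← hswap]
      ring

namespace Matrix

section
variable {n R : Type*} [Fintype n]

lemma trace_conjTranspose_mul_eq_sum [NonUnitalSemiring R] [Star R] (A B : Matrix n n R) :
    (Aᴴ * B).trace = ∑ i, ∑ j, star (A i j) * B i j := by
  simp only [trace, diag_apply, mul_apply, conjTranspose_apply]
  exact Finset.sum_comm

lemma trace_mul_diagonal_mul_mul_diagonal [DecidableEq n] [CommSemiring R]
    (A B : Matrix n n R) (a b : n → R) :
    (A * diagonal a * B * diagonal b).trace = ∑ i, ∑ j, A i j * a j * B j i * b i := by
  simp only [trace, diag_apply, mul_apply, diagonal_apply, mul_ite, mul_zero, Finset.sum_mul,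
    Finset.sum_ite_eq', Finset.mem_univ, if_true]

lemma trace_conjStarAlgAut [DecidableEq n] [CommSemiring R] [StarRing R]
    (U : unitary (Matrix n n R)) (A : Matrix n n R) : (conjStarAlgAut R _ U A).trace = A.trace := by
  rw [conjStarAlgAut_apply, trace_mul_cycle, coe_star_mul_self, one_mul]

lemma mul_add_eq_of_diagonal_mul_add_mul_diagonal [DecidableEq n] [CommRing R]
    {l : n → R} {Z M : Matrix n n R} {c : R} (h : diagonal l * Z + Z * diagonal l = c • M)
    (i j : n) : Z i j * (l i + l j) = c * M i j := by
  have hij := congrFun (congrFun h i) j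
  simp only [add_apply, diagonal_mul, mul_diagonal, smul_apply, smul_eq_mul] at hij
  linear_combination hij
end

section
variable {n 𝕜 : Type*} [Fintype n] [DecidableEq n] [RCLike 𝕜]

lemma re_trace_conjTranspose_mul_eq_of_diagonal_sylvester {l : n → ℝ} (hl : ∀ i, 0 < l i)
    {M Z : Matrix n n 𝕜}
    (hZ : diagonal (RCLike.ofReal ∘ l) * Z + Z * diagonal (RCLike.ofReal ∘ l) = (2 : 𝕜) • M) :
    RCLike.re (Mᴴ * Z).trace = ∑ i, ∑ j, ‖M i j‖ ^ 2 * (2 / (l i + l j)) := by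
  rw [trace_conjTranspose_mul_eq_sum, map_sum]
  refine Finset.sum_congr rfl fun i _ ↦ ?_
  rw [map_sum]
  refine Finset.sum_congr rfl fun j _ ↦ ?_
  have hpos : (0 : ℝ) < l i + l j := add_pos (hl i) (hl j)
  have hZij : Z i j = 2 * M i j / ((l i + l j : ℝ) : 𝕜) := by
    rw [eq_div_iff (by exact_mod_cast hpos.ne'), ← mul_add_eq_of_diagonal_mul_add_mul_diagonal hZ]
    simp
  rw [hZij, ← mul_div_assoc, mul_left_comm, RCLike.star_def, RCLike.conj_mul]
  norm_cast
  ring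

lemma IsHermitian.re_trace_mul_diagonal_mul_mul_diagonal {M : Matrix n n 𝕜}
    (hM : M.IsHermitian) (p q : n → ℝ) :
    RCLike.re (M * diagonal (RCLike.ofReal ∘ p) * M * diagonal (RCLike.ofReal ∘ q)).trace =
      ∑ i, ∑ j, ‖M i j‖ ^ 2 * (p j * q i) := by
  rw [trace_mul_diagonal_mul_mul_diagonal, map_sum]
  refine Finset.sum_congr rfl fun i _ ↦ ?_
  rw [map_sum]
  refine Finset.sum_congr rfl fun j _ ↦ ?_
  rw [← hM.apply j i, mul_right_comm _ _ (star _), RCLike.star_def, RCLike.mul_conj]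
  simp only [Function.comp_apply]
  norm_cast
  ring
end

end Matrix

lemma mrpow_eq_conjStarAlgAut {d : ℕ} {σ : Matrix (Fin d) (Fin d) ℂ} (hσ : σ.IsHermitian) (β : ℝ) :
    mrpow σ β = conjStarAlgAut ℂ _ hσ.eigenvectorUnitary
      (diagonal (RCLike.ofReal ∘ fun i ↦ hσ.eigenvalues i ^ β)) := by
  rw [mrpow, dif_pos hσ, conjStarAlgAut_apply]
  rfl

theorem chi_sq_bures_le_chi_sq_alpha_general (d : ℕ) (ρ σ Y : Matrix (Fin d) (Fin d) ℂ)
    (α : ℝ)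
    (hρ : ρ.PosSemidef)
    (hσ : σ.PosDef)
    (hY : σ * Y + Y * σ = (2 : ℂ) • (ρ - σ)) :
    (((ρ - σ)ᴴ * Y).trace).re ≤
      (((ρ - σ) * mrpow σ (-α) * (ρ - σ) * mrpow σ (α - 1)).trace).re := by
  have hH := hσ.isHermitian
  let φ := conjStarAlgAut ℂ (Matrix (Fin d) (Fin d) ℂ) hH.eigenvectorUnitary
  obtain ⟨M, hM⟩ : ∃ M, φ M = ρ - σ := ⟨_, φ.apply_symm_apply _⟩
  obtain ⟨Z, rfl⟩ : ∃ Z, φ Z = Y := ⟨_, φ.apply_symm_apply _⟩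
  have hMHerm : M.IsHermitian := by
    refine isHermitian_iff_isSelfAdjoint.mpr (EquivLike.injective φ ?_)
    rw [map_star, hM]
    exact (isHermitian_iff_isSelfAdjoint.mp (hρ.isHermitian.sub hH)).star_eq
  have hZ : diagonal (RCLike.ofReal ∘ hH.eigenvalues) * Z +
      Z * diagonal (RCLike.ofReal ∘ hH.eigenvalues) = (2 : ℂ) • M := EquivLike.injective φ <| by
    rw [map_add, map_mul, map_mul, map_smul, hM, ← hH.spectral_theorem, hY]
  rw [← hM, mrpow_eq_conjStarAlgAut hH, mrpow_eq_conjStarAlgAut hH, ← star_eq_conjTranspose,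
    ← map_star, ← map_mul, ← map_mul, ← map_mul, ← map_mul, trace_conjStarAlgAut,
    trace_conjStarAlgAut, star_eq_conjTranspose,
    ← RCLike.re_to_complex, ← RCLike.re_to_complex,
    re_trace_conjTranspose_mul_eq_of_diagonal_sylvester hσ.eigenvalues_pos hZ,
    hMHerm.re_trace_mul_diagonal_mul_mul_diagonal]
  exact sum_mul_two_div_add_le_sum_mul_rpow (fun _ _ ↦ by positivity)
    (fun i j ↦ by rw [← hMHerm.apply, norm_star]) hσ.eigenvalues_pos α

/-- For density matrices `ρ, σ` with `σ` positive definite and `α ∈ (0,1)`,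
the Bures χ²-divergence is bounded above by the mean α-divergence:
`⟨ρ-σ, Ω_Bures(ρ-σ)⟩ ≤ tr[(ρ-σ)σ^{-α}(ρ-σ)σ^{α-1}]`, where `Y = Ω_Bures(ρ-σ)` solves
`σY + Yσ = 2(ρ-σ)`. -/
theorem chi_sq_bures_le_chi_sq_alpha (d : ℕ) (ρ σ Y : Matrix (Fin d) (Fin d) ℂ)
    (α : ℝ) (hα : α ∈ Set.Ioo (0 : ℝ) 1)
    (hρ : ρ.PosSemidef) (hρtr : ρ.trace = 1)
    (hσ : σ.PosDef) (hσtr : σ.trace = 1)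
    (hY : σ * Y + Y * σ = (2 : ℂ) • (ρ - σ)) :
    (((ρ - σ)ᴴ * Y).trace).re ≤
      (((ρ - σ) * mrpow σ (-α) * (ρ - σ) * mrpow σ (α - 1)).trace).re :=
  chi_sq_bures_le_chi_sq_alpha_general d ρ σ Y α hρ hσ hY
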